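/- If M ≈_P N then M terminates under P iff N terminates under P. -/

import Mathlib

/-- Terms of continuation calculus: names (coded as naturals) and dot. -/
inductive Tm where
  | name : ℕ → Tm
  | dot : Tm → Tm → Tm
deriving DecidableEq

/-- Right-hand sides of rules: names, variables (de Bruijn-style indices
into the left-hand side's variable list), and dot. -/
inductive Rhs where
  | name : ℕ → Rhs
  | var : ℕ → Rhs
  | dot : Rhs → Rhs → Rhs
deriving DecidableEq

/-- A rule `n.x₁.⋯.xₖ → r`: head name, arity `k`, and right-hand side. -/
structure Rule where
  head : ℕ
  arity : ℕ
  rhs : Rhs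
deriving DecidableEq

/-- A program is a finite set of rules. -/
abbrev Program := Finset Rule

/-- Variables occurring in a right-hand side. -/
def Rhs.HasVar : Rhs → ℕ → Prop
  | .name _, _ => False
  | .var w, v => w = v
  | .dot a b, v => a.HasVar v ∨ b.HasVar v

/-- Well-formedness: every variable of a right-hand side occurs in the
left-hand side, and there is at most one rule per head name. -/
def Program.Wf (P : Program) : Prop :=
  (∀ r ∈ P, ∀ v, r.rhs.HasVar v → v < r.arity) ∧
  (∀ r₁ ∈ P, ∀ r₂ ∈ P, r₁.head = r₂.head → r₁ = r₂)

/-- `n.t₁.⋯.tₖ` : left-associated application of a term to a list of terms. -/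
def Tm.apps : Tm → List Tm → Tm
  | h, [] => h
  | h, t :: ts => Tm.apps (h.dot t) ts

/-- Instantiation of a right-hand side with the terms matched by the
left-hand side variables; fails if some variable is out of range. -/
def Rhs.inst (ts : List Tm) : Rhs → Option Tm
  | .name n => some (.name n)
  | .var v => ts[v]?
  | .dot a b => do pure (.dot (← a.inst ts) (← b.inst ts))

/-- One-step evaluation `M →_P N`. -/
def Step (P : Program) (M N : Tm) : Prop :=
  ∃ r ∈ P, ∃ ts : List Tm, ts.length = r.arity ∧
    M = Tm.apps (.name r.head) ts ∧ r.rhs.inst ts = some N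

/-- Multi-step evaluation `M →*_P N`. -/
def Steps (P : Program) : Tm → Tm → Prop := Relation.ReflTransGen (Step P)

/-- `M` is final: it has no successor. -/
def Final (P : Program) (M : Tm) : Prop := ¬ ∃ N, Step P M N

/-- `M` terminates: it evaluates to a final term. -/
def Terminates (P : Program) (M : Tm) : Prop := ∃ N, Steps P M N ∧ Final P N

/-- The name `m` occurs in a term. -/
def Tm.HasName (m : ℕ) : Tm → Prop
  | .name n => n = m
  | .dot a b => a.HasName m ∨ b.HasName m

/-- The name `m` occurs in a right-hand side. -/
def Rhs.HasName (m : ℕ) : Rhs → Prop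
  | .name n => n = m
  | .var _ => False
  | .dot a b => a.HasName m ∨ b.HasName m

/-- The name `m` occurs (is mentioned) in a program. -/
def Program.HasName (P : Program) (m : ℕ) : Prop :=
  ∃ r ∈ P, r.head = m ∨ r.rhs.HasName m

/-- The name `m` is defined by the program (is the head of some rule). -/
def Program.Defines (P : Program) (m : ℕ) : Prop :=
  ∃ r ∈ P, r.head = m

/-- Substitution of a term for a name, `M[fr := t]`. -/
def Tm.subName (m : ℕ) (t : Tm) : Tm → Tm
  | .name n => if n = m then t else .name n
  | .dot a b => .dot (Tm.subName m t a) (Tm.subName m t b)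

/-- Common reduct relation `M =_P N`. -/
def CommonRed (P : Program) (M N : Tm) : Prop :=
  ∃ t, Steps P M t ∧ Steps P N t

/-- Observational equivalence `M ≈_P N`. -/
def ObsEq (P : Program) (M N : Tm) : Prop :=
  ∀ P' : Program, P'.Wf → P ⊆ P' →
    ∀ X : Tm, (Terminates P' (X.dot M) ↔ Terminates P' (X.dot N))

/-- Renaming of names in a term. -/
def Tm.rename (f : ℕ → ℕ) : Tm → Tm
  | .name n => .name (f n)
  | .dot a b => .dot (a.rename f) (b.rename f)

/-- Renaming of names in a right-hand side. -/
def Rhs.rename (f : ℕ → ℕ) : Rhs → Rhs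
  | .name n => .name (f n)
  | .var v => .var v
  | .dot a b => .dot (a.rename f) (b.rename f)

/-- Renaming of names in a rule. -/
def Rule.rename (f : ℕ → ℕ) (r : Rule) : Rule :=
  ⟨f r.head, r.arity, r.rhs.rename f⟩

/-- Renaming of names in a program. -/
def Program.rename (f : ℕ → ℕ) (P : Program) : Program :=
  P.image (Rule.rename f)

/-- The fresh substitution `[n⃗ := m⃗]` as a function on names. -/
def renFun (ns ms : List ℕ) (n : ℕ) : ℕ :=
  ((ns.zip ms).lookup n).getD n

/-- `M` has arity `k` under `P`: `M = n.q₁.⋯.qᵢ` where `n` has a rule of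
arity `i + k`. -/
def Tm.ArityIs (P : Program) (M : Tm) (k : ℕ) : Prop :=
  ∃ r ∈ P, ∃ ts : List Tm, M = Tm.apps (.name r.head) ts ∧ ts.length + k = r.arity

/-!
Add to `P` the rule `f.x → x` for a name `f` occurring neither in `P` nor in `M`, `N`, and
take the context `X = f`. Evaluation is deterministic, so `f.M` terminates iff `M` does; and
no reduct of `M` mentions `f`, so the new rule never fires on them and `M` terminates under
the extended program iff it terminates under `P`. The same holds for `N`.
-/

def Tm.maxName : Tm → ℕ
  | .name n => n
  | .dot a b => max a.maxName b.maxName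

def Rhs.maxName : Rhs → ℕ
  | .name n => n
  | .var _ => 0
  | .dot a b => max a.maxName b.maxName

def Program.maxName (P : Program) : ℕ :=
  P.sup fun r => max r.head r.rhs.maxName

theorem Tm.HasName.le_maxName {m : ℕ} : ∀ {t : Tm}, t.HasName m → m ≤ t.maxName
  | .name _, h => h.ge
  | .dot _ _, .inl h => le_max_of_le_left h.le_maxName
  | .dot _ _, .inr h => le_max_of_le_right h.le_maxName

theorem Rhs.HasName.le_maxName {m : ℕ} : ∀ {r : Rhs}, r.HasName m → m ≤ r.maxName
  | .name _, h => h.ge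
  | .dot _ _, .inl h => le_max_of_le_left h.le_maxName
  | .dot _ _, .inr h => le_max_of_le_right h.le_maxName

theorem Program.HasName.le_maxName {P : Program} {m : ℕ} (h : P.HasName m) :
    m ≤ P.maxName := by
  obtain ⟨r, hr, hm⟩ := h
  refine le_trans ?_ (Finset.le_sup (f := fun r => max r.head r.rhs.maxName) hr)
  rcases hm with rfl | hm
  · exact le_max_left _ _
  · exact le_max_of_le_right hm.le_maxName

theorem Tm.apps_append_singleton (t : Tm) :
    ∀ (h : Tm) (ts : List Tm), Tm.apps h (ts ++ [t]) = (Tm.apps h ts).dot t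
  | _, [] => rfl
  | h, s :: ts => Tm.apps_append_singleton t (h.dot s) ts

theorem Tm.apps_name_injective {n n' : ℕ} {ts ts' : List Tm}
    (h : Tm.apps (.name n) ts = Tm.apps (.name n') ts') : n = n' ∧ ts = ts' := by
  induction ts using List.reverseRecOn generalizing ts' with
  | nil =>
    cases ts' using List.reverseRecOn with
    | nil => simpa [Tm.apps] using h
    | append_singleton ts' t' => simp [Tm.apps, Tm.apps_append_singleton] at h
  | append_singleton ts t ih =>
    cases ts' using List.reverseRecOn with
    | nil => simp [Tm.apps, Tm.apps_append_singleton] at h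
    | append_singleton ts' t' =>
      simp only [Tm.apps_append_singleton, Tm.dot.injEq] at h
      obtain ⟨rfl, rfl⟩ := ih h.1
      exact ⟨rfl, by rw [h.2]⟩

theorem Tm.hasName_apps {m : ℕ} :
    ∀ (h : Tm) (ts : List Tm), (Tm.apps h ts).HasName m ↔ h.HasName m ∨ ∃ t ∈ ts, t.HasName m
  | _, [] => by simp [Tm.apps]
  | h, t :: ts => by
    rw [Tm.apps, Tm.hasName_apps _ ts]
    simp [Tm.HasName, or_assoc]

theorem Rhs.not_hasName_of_inst {m : ℕ} {ts : List Tm} (hts : ∀ t ∈ ts, ¬ t.HasName m) :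
    ∀ {r : Rhs} {Y : Tm}, ¬ r.HasName m → r.inst ts = some Y → ¬ Y.HasName m
  | .name _, _, hr, hY => by
    cases hY
    exact hr
  | .var _, Y, _, hY => hts Y (List.mem_of_getElem? hY)
  | .dot a b, _, hr, hY => by
    simp only [Rhs.inst, Option.bind_eq_bind, Option.pure_def, Option.bind_eq_some_iff,
      Option.some.injEq] at hY
    obtain ⟨x, hx, y, hy, rfl⟩ := hY
    rintro (hm | hm)
    · exact Rhs.not_hasName_of_inst hts (fun ha => hr (.inl ha)) hx hm
    · exact Rhs.not_hasName_of_inst hts (fun hb => hr (.inr hb)) hy hm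

theorem Program.Wf.step_unique {P : Program} (hP : P.Wf) {M N₁ N₂ : Tm}
    (h₁ : Step P M N₁) (h₂ : Step P M N₂) : N₁ = N₂ := by
  obtain ⟨r₁, hr₁, ts₁, -, rfl, hN₁⟩ := h₁
  obtain ⟨r₂, hr₂, ts₂, -, hM, hN₂⟩ := h₂
  obtain ⟨hhead, rfl⟩ := Tm.apps_name_injective hM
  obtain rfl := hP.2 r₁ hr₁ r₂ hr₂ hhead
  exact Option.some_injective _ (hN₁.symm.trans hN₂)

theorem Program.Wf.terminates_iff_of_step {P : Program} (hP : P.Wf) {M M' : Tm}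
    (h : Step P M M') : Terminates P M ↔ Terminates P M' := by
  refine ⟨fun ⟨Z, hMZ, hZ⟩ => ?_, fun ⟨Z, hM'Z, hZ⟩ => ⟨Z, .head h hM'Z, hZ⟩⟩
  rcases hMZ.cases_head with rfl | ⟨M'', h', hM''Z⟩
  · exact absurd ⟨M', h⟩ hZ
  · exact ⟨Z, hP.step_unique h h' ▸ hM''Z, hZ⟩

theorem Step.mono {P Q : Program} (hPQ : P ⊆ Q) {M N : Tm} (h : Step P M N) : Step Q M N :=
  let ⟨r, hr, rest⟩ := h
  ⟨r, hPQ hr, rest⟩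

theorem Steps.mono {P Q : Program} (hPQ : P ⊆ Q) {M N : Tm} (h : Steps P M N) : Steps Q M N :=
  Relation.ReflTransGen.mono (fun _ _ => Step.mono hPQ) _ _ h

section FreshName

variable {P : Program} {m : ℕ} {X Y : Tm}

theorem Step.not_hasName (hP : ¬ P.HasName m) (h : Step P X Y) (hX : ¬ X.HasName m) :
    ¬ Y.HasName m := by
  obtain ⟨r, hr, ts, -, rfl, hY⟩ := h
  rw [Tm.hasName_apps, not_or, not_exists] at hX
  exact Rhs.not_hasName_of_inst (fun t ht => not_and.1 (hX.2 t) ht)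
    (fun hm => hP ⟨r, hr, .inr hm⟩) hY

theorem Steps.not_hasName (hP : ¬ P.HasName m) (h : Steps P X Y) (hX : ¬ X.HasName m) :
    ¬ Y.HasName m := by
  induction h with
  | refl => exact hX
  | tail _ hstep ih => exact hstep.not_hasName hP ih

variable {r : Rule}

theorem step_insert_iff (hX : ¬ X.HasName r.head) : Step (insert r P) X Y ↔ Step P X Y := by
  refine ⟨fun ⟨r', hr', ts, hlen, hXeq, hY⟩ => ?_, Step.mono (Finset.subset_insert r P)⟩
  rcases Finset.mem_insert.1 hr' with rfl | hr'
  · rw [hXeq, Tm.hasName_apps] at hX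
    exact absurd (.inl rfl) hX
  · exact ⟨r', hr', ts, hlen, hXeq, hY⟩

theorem steps_insert_iff (hP : ¬ P.HasName r.head) (hX : ¬ X.HasName r.head) :
    Steps (insert r P) X Y ↔ Steps P X Y := by
  refine ⟨fun h => ?_, Steps.mono (Finset.subset_insert r P)⟩
  induction h with
  | refl => exact .refl
  | tail _ hstep ih => exact ih.tail ((step_insert_iff (ih.not_hasName hP hX)).1 hstep)

theorem final_insert_iff (hX : ¬ X.HasName r.head) : Final (insert r P) X ↔ Final P X :=
  not_congr (exists_congr fun _ => step_insert_iff hX)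

theorem terminates_insert_iff (hP : ¬ P.HasName r.head) (hX : ¬ X.HasName r.head) :
    Terminates (insert r P) X ↔ Terminates P X := by
  refine exists_congr fun Z => ?_
  rw [steps_insert_iff hP hX]
  exact and_congr_right fun hZ => final_insert_iff (hZ.not_hasName hP hX)

end FreshName

theorem Program.Wf.insert {P : Program} (hP : P.Wf) {r : Rule}
    (hr : ∀ v, r.rhs.HasVar v → v < r.arity) (hfresh : ¬ P.Defines r.head) :
    (insert r P).Wf := by
  refine ⟨fun r' hr' => ?_, fun r₁ h₁ r₂ h₂ hhead => ?_⟩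
  · rcases Finset.mem_insert.1 hr' with rfl | hr'
    exacts [hr, hP.1 r' hr']
  · rw [Finset.mem_insert] at h₁ h₂
    rcases h₁ with rfl | h₁ <;> rcases h₂ with rfl | h₂
    · rfl
    · exact absurd ⟨r₂, h₂, hhead.symm⟩ hfresh
    · exact absurd ⟨r₁, h₁, hhead⟩ hfresh
    · exact hP.2 r₁ h₁ r₂ h₂ hhead

def idRule (f : ℕ) : Rule := ⟨f, 1, .var 0⟩

theorem step_idRule (P : Program) (f : ℕ) (M : Tm) :
    Step (insert (idRule f) P) ((Tm.name f).dot M) M :=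
  ⟨idRule f, Finset.mem_insert_self _ _, [M], rfl, rfl, rfl⟩

theorem obsEq_terminates_iff (P : Program) (hP : P.Wf) (M N : Tm)
    (h : ObsEq P M N) : Terminates P M ↔ Terminates P N := by
  obtain ⟨f, hf⟩ : ∃ f, max P.maxName (max M.maxName N.maxName) < f := ⟨_, Nat.lt_succ_self _⟩
  have hfP : ¬ P.HasName f := fun hm => by have := hm.le_maxName; omega
  have hfM : ¬ M.HasName f := fun hm => by have := hm.le_maxName; omega
  have hfN : ¬ N.HasName f := fun hm => by have := hm.le_maxName; omega
  have hwf : (insert (idRule f) P).Wf :=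
    hP.insert (fun _ hv => hv ▸ Nat.one_pos) fun ⟨r, hr, hhead⟩ => hfP ⟨r, hr, .inl hhead⟩
  have hobs := h _ hwf (Finset.subset_insert _ P) (.name f)
  rwa [hwf.terminates_iff_of_step (step_idRule P f M),
    hwf.terminates_iff_of_step (step_idRule P f N), terminates_insert_iff (r := idRule f) hfP hfM,
    terminates_insert_iff (r := idRule f) hfP hfN] at hobs
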